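/- Let F¹², F¹³, F³² be 3×3 real matrices with F³² = F³¹ [e]ₓ F¹², where F²¹ = (F¹²)ᵀ, F³¹ = (F¹³)ᵀ, e = e₁² = e₁³ satisfies eᵀF¹² = 0 and eᵀF¹³ = 0, and in image 3 the two epipoles coincide: e₃¹ = e₃², where Fⁱʲ eⱼⁱ = 0. Then with C₁ = [[e]ₓ F¹² | e], C₂ = [I | 0], and C₃ = [[e₃²]ₓ F³² + e₃² vᵀ | λ e₃²], the matrix C₁ᵀ F¹³ C₃ is skew-symmetric. -/
import Mathlib


open Matrix

/-- The skew-symmetric (cross-product) matrix of a vector. -/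
def skewMat (t : Fin 3 → ℝ) : Matrix (Fin 3) (Fin 3) ℝ :=
  !![0, -t 2, t 1; t 2, 0, -t 0; -t 1, t 0, 0]

/-- The 3×4 matrix with left 3×3 block `A` and last column `b`. -/
def aug (A : Matrix (Fin 3) (Fin 3) ℝ) (b : Fin 3 → ℝ) : Matrix (Fin 3) (Fin 4) ℝ :=
  Matrix.of fun i j => if h : (j : ℕ) < 3 then A i ⟨j, h⟩ else b i

lemma skewMat_transpose (t : Fin 3 → ℝ) : (skewMat t)ᵀ = -skewMat t := by
  ext i j; fin_cases i <;> fin_cases j <;> simp [skewMat]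

lemma mul_aug (X A : Matrix (Fin 3) (Fin 3) ℝ) (b : Fin 3 → ℝ) :
    X * aug A b = aug (X * A) (X *ᵥ b) := by
  ext i j
  by_cases h : (j : ℕ) < 3 <;>
    simp [aug, mul_apply, mulVec, dotProduct, h]

lemma augT_mul_aug (A B : Matrix (Fin 3) (Fin 3) ℝ) (b c : Fin 3 → ℝ) (i j : Fin 4) :
    ((aug A b)ᵀ * aug B c) i j =
      if hi : (i : ℕ) < 3 then
        (if hj : (j : ℕ) < 3 then (Aᵀ * B) ⟨i, hi⟩ ⟨j, hj⟩ else (Aᵀ *ᵥ c) ⟨i, hi⟩)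
      else
        (if hj : (j : ℕ) < 3 then (b ᵥ* B) ⟨j, hj⟩ else b ⬝ᵥ c) := by
  by_cases hi : (i : ℕ) < 3 <;> by_cases hj : (j : ℕ) < 3 <;>
    simp [aug, mul_apply, mulVec, vecMul, dotProduct, hi, hj, mul_comm]

/-- Collinear case: given `F³² = F³¹ [e]ₓ F¹²` and coinciding epipoles, the camera
`C₃ = [[e₃²]ₓF³² + e₃²vᵀ | λe₃²]` together with `C₁ = [[e]ₓF¹² | e]` solves
`F¹³`, i.e. `C₁ᵀ F¹³ C₃` is skew-symmetric. -/
theorem collinear_case_third_camera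
    (F12 F13 F32 : Matrix (Fin 3) (Fin 3) ℝ)
    (e e3 : Fin 3 → ℝ)
    (heF12 : vecMul e F12 = 0) (heF13 : vecMul e F13 = 0)
    (he3F13 : F13.mulVec e3 = 0) (he3F32 : vecMul e3 F32 = 0)
    (hrel : F32 = F13ᵀ * skewMat e * F12)
    (v : Fin 3 → ℝ) (lam : ℝ) (hlam : lam ≠ 0) :
    ((aug (skewMat e * F12) e)ᵀ * F13 *
        aug (skewMat e3 * F32 + vecMulVec e3 v) (lam • e3))ᵀ =
      -((aug (skewMat e * F12) e)ᵀ * F13 *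
        aug (skewMat e3 * F32 + vecMulVec e3 v) (lam • e3)) := by
  set A1 := skewMat e * F12 with hA1
  set A3 := skewMat e3 * F32 + vecMulVec e3 v with hA3
  set N := F32ᵀ * skewMat e3 * F32 with hNdef
  -- the last column of F13 * C₃ vanishes
  have hcol : F13 *ᵥ (lam • e3) = 0 := by
    rw [mulVec_smul, he3F13, smul_zero]
  -- F32ᵀ kills the rank-one part
  have hF32v : F32ᵀ * vecMulVec e3 v = 0 := by
    ext i j
    have h := congrFun he3F32 i
    simp only [vecMul, dotProduct, Pi.zero_apply] at h
    simp only [mul_apply, vecMulVec_apply, transpose_apply, Matrix.zero_apply]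
    calc ∑ k, F32 k i * (e3 k * v j) = (∑ k, e3 k * F32 k i) * v j := by
          rw [Finset.sum_mul]; exact Finset.sum_congr rfl fun k _ => by ring
      _ = 0 := by rw [h, zero_mul]
  -- A1ᵀ * F13 = F32ᵀ
  have hA1F : A1ᵀ * F13 = F32ᵀ := by
    rw [hA1, hrel]
    simp [transpose_mul, Matrix.mul_assoc]
  -- the 3×3 core
  have hN : A1ᵀ * (F13 * A3) = N := by
    rw [← Matrix.mul_assoc, hA1F, hA3, Matrix.mul_add, hF32v, add_zero,
      hNdef, Matrix.mul_assoc]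
  have hNskew : Nᵀ = -N := by
    simp [hNdef, transpose_mul, skewMat_transpose, Matrix.mul_assoc,
      Matrix.neg_mul, Matrix.mul_neg]
  -- the last row vanishes
  have hrow : e ᵥ* (F13 * A3) = 0 := by
    rw [← vecMul_vecMul, heF13, zero_vecMul]
  ext i j
  rw [transpose_apply, Matrix.neg_apply, Matrix.mul_assoc, mul_aug, hcol,
    augT_mul_aug, augT_mul_aug]
  by_cases hi : (i : ℕ) < 3 <;> by_cases hj : (j : ℕ) < 3 <;>
    simp only [hi, hj, dif_pos, dif_neg, not_lt, hN, hrow, mulVec_zero,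
      Pi.zero_apply, dotProduct_zero, neg_zero]
  · have h := congrFun (congrFun hNskew ⟨i, hi⟩) ⟨j, hj⟩
    simpa [transpose_apply, Matrix.neg_apply] using h
  all_goals simp
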